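/- Existence of minimizers of the Tikhonov functional: let F : H → Y be a weakly sequentially closed map between Hilbert spaces H and Y, h ∈ Y, α > 0, and J(x) = ½‖F(x) − h‖²_Y + (α/2)‖x‖²_H. Then J attains its infimum on H, i.e., there exists x* ∈ H with J(x*) = inf_{x∈H} J(x). -/

import Mathlib

/-!
Take a minimizing sequence of `J`. The regularization term `(α/2)‖x‖²` and the data term bound
both the sequence and its image under `F`, so by sequential Banach–Alaoglu a subsequence converges
weakly to some `x₀` while its image converges weakly to some `y₀`; weak sequential closedness of
`F` gives `y₀ = F x₀`. Since `‖a‖² ≥ ‖b‖² + 2⟪a - b, b⟫`, squared norms are weakly sequentially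
lower semicontinuous, hence `J x₀ ≤ inf J`.
-/

open Filter Topology

noncomputable section

/-- Weak convergence of a sequence in an inner product space, tested against
inner products with arbitrary vectors. -/
def WeakConv {H : Type*} [NormedAddCommGroup H] [InnerProductSpace ℝ H]
    (x : ℕ → H) (x₀ : H) : Prop :=
  ∀ z : H, Tendsto (fun k => (inner ℝ (x k) z : ℝ)) atTop (𝓝 (inner ℝ x₀ z : ℝ))

open InnerProductSpace RealInnerProductSpace

section WeakConv

variable {E : Type*} [NormedAddCommGroup E] [InnerProductSpace ℝ E]

theorem WeakConv.comp_tendsto {x : ℕ → E} {x₀ : E} (hx : WeakConv x x₀) {φ : ℕ → ℕ}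
    (hφ : Tendsto φ atTop atTop) : WeakConv (x ∘ φ) x₀ :=
  fun z => (hx z).comp hφ

theorem WeakConv.sub_const {x : ℕ → E} {x₀ : E} (hx : WeakConv x x₀) (c : E) :
    WeakConv (fun k => x k - c) (x₀ - c) := fun z => by
  simpa only [inner_sub_left] using (hx z).sub_const ⟪c, z⟫

theorem WeakConv.tendsto_inner_sub {x : ℕ → E} {x₀ : E} (hx : WeakConv x x₀) (z : E) :
    Tendsto (fun k => ⟪x k - x₀, z⟫) atTop (𝓝 0) := by
  simpa only [inner_sub_left, sub_self] using (hx z).sub_const ⟪x₀, z⟫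

theorem norm_sq_add_two_inner_sub_le (a b : E) : ‖b‖ ^ 2 + 2 * ⟪a - b, b⟫ ≤ ‖a‖ ^ 2 := by
  have h := norm_add_sq_real (a - b) b
  rw [sub_add_cancel] at h
  nlinarith [sq_nonneg ‖a - b‖]

theorem WeakConv.add_norm_sq_le_of_tendsto {F : Type*} [NormedAddCommGroup F]
    [InnerProductSpace ℝ F] {a b L : ℝ} (ha : 0 ≤ a) (hb : 0 ≤ b) {x : ℕ → E} {x₀ : E}
    {y : ℕ → F} {y₀ : F} (hx : WeakConv x x₀) (hy : WeakConv y y₀)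
    (hL : Tendsto (fun k => a * ‖y k‖ ^ 2 + b * ‖x k‖ ^ 2) atTop (𝓝 L)) :
    a * ‖y₀‖ ^ 2 + b * ‖x₀‖ ^ 2 ≤ L := by
  have hlower : Tendsto (fun k => a * (‖y₀‖ ^ 2 + 2 * ⟪y k - y₀, y₀⟫)
      + b * (‖x₀‖ ^ 2 + 2 * ⟪x k - x₀, x₀⟫)) atTop
      (𝓝 (a * (‖y₀‖ ^ 2 + 2 * 0) + b * (‖x₀‖ ^ 2 + 2 * 0))) :=
    ((((hy.tendsto_inner_sub y₀).const_mul 2).const_add _).const_mul a).add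
      ((((hx.tendsto_inner_sub x₀).const_mul 2).const_add _).const_mul b)
  simp only [mul_zero, add_zero] at hlower
  refine le_of_tendsto_of_tendsto' hlower hL fun k => ?_
  gcongr <;> exact norm_sq_add_two_inner_sub_le _ _

theorem WeakConv.coe_submodule {K : Submodule ℝ E} [K.HasOrthogonalProjection] {x : ℕ → K}
    {x₀ : K} (hx : WeakConv x x₀) : WeakConv (fun k => (x k : E)) x₀ := fun z => by
  simpa only [Submodule.inner_orthogonalProjectionOnto_eq_of_mem_left] using
    hx (K.orthogonalProjectionOnto z)

end WeakConv

section SequentialBanachAlaoglu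

variable {E : Type*} [NormedAddCommGroup E] [InnerProductSpace ℝ E] [CompleteSpace E]

theorem exists_weakConv_subseq_of_separableSpace [TopologicalSpace.SeparableSpace E]
    {x : ℕ → E} {R : ℝ} (hR : ∀ k, ‖x k‖ ≤ R) :
    ∃ φ : ℕ → ℕ, StrictMono φ ∧ ∃ x₀ : E, WeakConv (x ∘ φ) x₀ := by
  let ℓ : ℕ → WeakDual ℝ E := fun k => StrongDual.toWeakDual (toDual ℝ E (x k))
  have hℓ : ∀ k, ℓ k ∈ WeakDual.toStrongDual ⁻¹' Metric.closedBall 0 R := fun k => by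
    simpa [ℓ] using hR k
  obtain ⟨ℓ₀, -, φ, hφ, hlim⟩ := WeakDual.isSeqCompact_closedBall ℝ E 0 R hℓ
  refine ⟨φ, hφ, (toDual ℝ E).symm (WeakDual.toStrongDual ℓ₀), fun z => ?_⟩
  rw [toDual_symm_apply]
  exact ((WeakDual.eval_continuous z).tendsto ℓ₀).comp hlim

/-- Sequential Banach–Alaoglu: reduce to the closed span of the sequence, which is separable. -/
theorem exists_weakConv_subseq {x : ℕ → E} {R : ℝ} (hR : ∀ k, ‖x k‖ ≤ R) :
    ∃ φ : ℕ → ℕ, StrictMono φ ∧ ∃ x₀ : E, WeakConv (x ∘ φ) x₀ := by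
  set K := (Submodule.span ℝ (Set.range x)).topologicalClosure
  have hxK : ∀ k, x k ∈ K := fun k =>
    Submodule.le_topologicalClosure _ (Submodule.subset_span (Set.mem_range_self k))
  have : CompleteSpace K :=
    (Submodule.span ℝ (Set.range x)).isClosed_topologicalClosure.completeSpace_coe
  have : TopologicalSpace.SeparableSpace K := by
    refine TopologicalSpace.IsSeparable.separableSpace ?_
    rw [Submodule.topologicalClosure_coe]
    exact (Set.countable_range x).isSeparable.span.closure
  obtain ⟨φ, hφ, x₀, hx₀⟩ :=
    exists_weakConv_subseq_of_separableSpace (x := fun k => (⟨x k, hxK k⟩ : K)) hR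
  exact ⟨φ, hφ, x₀, hx₀.coe_submodule⟩

end SequentialBanachAlaoglu

theorem exists_seq_antitone_tendsto_iInf {X : Type*} [Nonempty X] {f : X → ℝ}
    (hf : BddBelow (Set.range f)) :
    ∃ u : ℕ → X, Antitone (f ∘ u) ∧ Tendsto (f ∘ u) atTop (𝓝 (⨅ x, f x)) := by
  obtain ⟨v, hv_anti, hv_lim, hv_mem⟩ := exists_seq_tendsto_sInf (Set.range_nonempty f) hf
  choose u hu using hv_mem
  have hfu : f ∘ u = v := funext hu
  exact ⟨u, hfu ▸ hv_anti, hfu ▸ hv_lim⟩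

theorem tikhonov_functional_attains_infimum
    {H Y : Type*} [NormedAddCommGroup H] [InnerProductSpace ℝ H] [CompleteSpace H]
    [NormedAddCommGroup Y] [InnerProductSpace ℝ Y] [CompleteSpace Y]
    (F : H → Y)
    -- F is weakly sequentially closed
    (hF : ∀ (x : ℕ → H) (x₀ : H) (y : Y),
      WeakConv x x₀ → WeakConv (fun k => F (x k)) y → y = F x₀)
    (h : Y) (α : ℝ) (hα : 0 < α)
    (J : H → ℝ)
    (hJ : ∀ x : H, J x = (1 / 2) * ‖F x - h‖ ^ 2 + (α / 2) * ‖x‖ ^ 2) :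
    ∃ xstar : H, ∀ x : H, J xstar ≤ J x := by
  have hJ_bdd : BddBelow (Set.range J) := ⟨0, by rintro _ ⟨x, rfl⟩; rw [hJ]; positivity⟩
  have : Nonempty H := ⟨0⟩
  obtain ⟨u, hu_anti, hu_lim⟩ := exists_seq_antitone_tendsto_iInf hJ_bdd
  have hJu : ∀ k, (1 / 2) * ‖F (u k) - h‖ ^ 2 + (α / 2) * ‖u k‖ ^ 2 ≤ J (u 0) := fun k =>
    hJ (u k) ▸ hu_anti (Nat.zero_le k)
  have hu_bdd : ∀ k, ‖u k‖ ≤ √(2 * J (u 0) / α) := fun k => Real.le_sqrt_of_sq_le <| by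
    rw [le_div_iff₀ hα]; nlinarith [hJu k, sq_nonneg ‖F (u k) - h‖]
  have hFu_bdd : ∀ k, ‖F (u k)‖ ≤ ‖h‖ + √(2 * J (u 0)) := fun k => by
    have : ‖F (u k) - h‖ ≤ √(2 * J (u 0)) := Real.le_sqrt_of_sq_le <| by
      nlinarith [hJu k, mul_nonneg hα.le (sq_nonneg ‖u k‖)]
    linarith [norm_le_norm_add_norm_sub' (F (u k)) h]
  obtain ⟨φ, hφ, x₀, hux₀⟩ := exists_weakConv_subseq hu_bdd
  obtain ⟨ψ, hψ, y₀, hFuy₀⟩ := exists_weakConv_subseq fun k => hFu_bdd (φ k)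
  have hsub : WeakConv (u ∘ φ ∘ ψ) x₀ := hux₀.comp_tendsto hψ.tendsto_atTop
  obtain rfl : y₀ = F x₀ := hF _ x₀ y₀ hsub hFuy₀
  have hJ_lim := (hu_lim.comp (hφ.comp hψ).tendsto_atTop).congr fun k => hJ _
  have hJx₀ : J x₀ ≤ ⨅ x, J x := hJ x₀ ▸
    WeakConv.add_norm_sq_le_of_tendsto (by norm_num) (by positivity) hsub (hFuy₀.sub_const h)
      hJ_lim
  exact ⟨x₀, fun x => hJx₀.trans (ciInf_le hJ_bdd x)⟩

end
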